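/- arXiv:1305.3828 — 5 statements merged into one kernel-verified Lean document; each statement's English description precedes it below -/
import Mathlib

section
/- Let l be a list over a linear order and C a finite set of its positions such that l is faithfully ordered with respect to C. Then the number of adjacent inversions of l, i.e., the number of indices i with l[i] ≥ l[i+1], is at most 2·|C|: each corrupted position can create at most two adjacent inversions. -/
/-!
An adjacent inversion `l[i+1] ≤ l[i]` cannot have both positions `i` and `i+1` faithful, since
faithful entries increase strictly; so every inversion index lies in `C ∪ (C - 1)`, a set of at
most `2 * #C` elements.
-/

/-- A list `l` in unreliable memory is faithfully ordered with respect to the set `C`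
of corrupted positions if the entries at faithful (non-corrupted) positions appear in
strictly increasing order. -/
def FaithfullyOrdered {α : Type*} [LinearOrder α] (l : List α) (C : Set ℕ) : Prop :=
  ∀ (i j : ℕ) (hi : i < l.length) (hj : j < l.length),
    i < j → i ∉ C → j ∉ C → l[i] < l[j]

open Finset

theorem List.length_filter_ofFn {β : Type*} {n : ℕ} (f : Fin n → β) (p : β → Bool) :
    ((List.ofFn f).filter p).length = #{i | p (f i)} := by
  rw [List.ofFn_eq_map, List.filter_map, List.length_map, Finset.filter, Fin.univ_def]
  simp only [card_mk, Multiset.filter_coe, Multiset.coe_card, Function.comp_def,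
    Bool.decide_eq_true]

theorem List.zip_tail_eq_ofFn {α : Type*} (l : List α) :
    l.zip l.tail = List.ofFn (fun i : Fin (l.length - 1) =>
      (l[(i : ℕ)]'(by omega), l[(i : ℕ) + 1]'(by omega))) := by
  apply List.ext_getElem <;> simp [List.getElem_zip]

theorem Finset.card_le_two_mul_of_forall_mem_or_succ_mem {s C : Finset ℕ}
    (h : ∀ i ∈ s, i ∈ C ∨ i + 1 ∈ C) : #s ≤ 2 * #C :=
  calc #s ≤ #(C ∪ C.image (· - 1)) := card_le_card fun i hi => by
          rcases h i hi with hC | hC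
          · exact mem_union_left _ hC
          · exact mem_union_right _ (mem_image.mpr ⟨i + 1, hC, rfl⟩)
    _ ≤ #C + #C := (card_union_le _ _).trans (Nat.add_le_add_left card_image_le _)
    _ = 2 * #C := (two_mul _).symm

theorem FaithfullyOrdered.mem_or_succ_mem_of_le {α : Type*} [LinearOrder α] {l : List α}
    {C : Set ℕ} (h : FaithfullyOrdered l C) {i : ℕ} (hi : i + 1 < l.length)
    (hle : l[i + 1] ≤ l[i]) : i ∈ C ∨ i + 1 ∈ C := by
  by_contra! hC
  exact (h i (i + 1) (by omega) hi i.lt_succ_self hC.1 hC.2).not_ge hle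

/-- a faithfully ordered list has at most `2·|C|` adjacent inversions,
i.e., indices `i` with `l[i] ≥ l[i+1]` (counted via the pairs of `l.zip l.tail`). -/
theorem adjacent_inversions_le_two_mul_faults {α : Type*} [LinearOrder α]
    (l : List α) (C : Finset ℕ) (h : FaithfullyOrdered l ↑C) :
    ((l.zip l.tail).filter (fun p => p.2 ≤ p.1)).length ≤ 2 * C.card := by
  rw [l.zip_tail_eq_ofFn, List.length_filter_ofFn, ← card_map Fin.valEmbedding]
  refine card_le_two_mul_of_forall_mem_or_succ_mem fun _ hi => ?_
  obtain ⟨i, hdesc, rfl⟩ := mem_map.mp hi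
  rw [mem_filter, decide_eq_true_eq] at hdesc
  exact h.mem_or_succ_mem_of_le _ hdesc.2
end

section
/- Let p₁ < p₂ < ⋯ < p_S be strictly increasing pivot values (stored in safe memory, hence never corrupted), and let B₀, B₁, …, B_{S−1} be lists over the same linear order, each B_i faithfully ordered with respect to a corrupted-position set C_i. Suppose every faithful value of B₀ is strictly less than p₁ and, for 1 ≤ i ≤ S−1, every faithful value of B_i lies strictly between p_i and p_{i+1}. Then the interleaved concatenation B₀ ++ [p₁] ++ B₁ ++ [p₂] ++ ⋯ ++ B_{S−1} ++ [p_S] is faithfully ordered with respect to the induced corrupted-position set (the union of the shifted C_i; the pivot positions are faithful). -/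
section FaithfulEntries

variable {α : Type*}

def faithfulEntries (l : List α) (C : Set ℕ) : Set α :=
  {x | ∃ (i : ℕ) (hi : i < l.length), i ∉ C ∧ l[i] = x}

theorem getElem_mem_faithfulEntries {l : List α} {C : Set ℕ} {i : ℕ} (hi : i < l.length)
    (hiC : i ∉ C) : l[i] ∈ faithfulEntries l C :=
  ⟨i, hi, hiC, rfl⟩

theorem faithfulEntries_inter_Iio_length (l : List α) (C : Set ℕ) :
    faithfulEntries l (C ∩ Set.Iio l.length) = faithfulEntries l C := by
  ext x
  constructor
  · rintro ⟨i, hi, hiC, rfl⟩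
    exact ⟨i, hi, fun h => hiC ⟨h, hi⟩, rfl⟩
  · rintro ⟨i, hi, hiC, rfl⟩
    exact ⟨i, hi, fun h => hiC h.1, rfl⟩

theorem faithfulEntries_singleton_subset (a : α) (C : Set ℕ) :
    faithfulEntries [a] C ⊆ {a} := by
  rintro _ ⟨i, hi, -, rfl⟩
  simp

theorem faithfulEntries_append_subset (l₁ l₂ : List α) (C₁ C₂ : Set ℕ) :
    faithfulEntries (l₁ ++ l₂) (C₁ ∪ (l₁.length + ·) '' C₂) ⊆
      faithfulEntries l₁ C₁ ∪ faithfulEntries l₂ C₂ := by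
  rintro _ ⟨k, hk, hkC, rfl⟩
  rw [List.length_append] at hk
  by_cases h : k < l₁.length
  · rw [List.getElem_append_left h]
    exact Or.inl ⟨k, h, fun hC => hkC (Or.inl hC), rfl⟩
  · rw [not_lt] at h
    rw [List.getElem_append_right h]
    refine Or.inr ⟨k - l₁.length, by omega, fun hC => hkC (Or.inr ⟨_, hC, ?_⟩), rfl⟩
    simp only
    omega

theorem faithfulEntries_append_singleton_subset (l : List α) (C : Set ℕ) (a : α) :
    faithfulEntries (l ++ [a]) (C ∩ Set.Iio l.length) ⊆ insert a (faithfulEntries l C) := by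
  intro x hx
  have := faithfulEntries_append_subset l [a] (C ∩ Set.Iio l.length) ∅
    (by simpa only [Set.image_empty, Set.union_empty] using hx)
  rw [faithfulEntries_inter_Iio_length] at this
  rcases this with hx | hx
  · exact Or.inr hx
  · exact Or.inl (faithfulEntries_singleton_subset a ∅ hx)

theorem length_flatten_map_range (f : ℕ → List α) (S : ℕ) :
    ((List.range S).map f).flatten.length = ∑ i ∈ Finset.range S, (f i).length := by
  induction S with
  | zero => simp
  | succ S ih => simp [List.range_succ, Finset.sum_range_succ, ih]

theorem faithfulEntries_flatten_map_range_subset (f : ℕ → List α) (D : ℕ → Set ℕ) (S : ℕ) :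
    faithfulEntries ((List.range S).map f).flatten
        (⋃ i, ⋃ (_ : i < S), (fun c => (∑ j ∈ Finset.range i, (f j).length) + c) '' D i) ⊆
      ⋃ i, ⋃ (_ : i < S), faithfulEntries (f i) (D i) := by
  induction S with
  | zero => rintro _ ⟨k, hk, -, rfl⟩; simp at hk
  | succ S ih =>
    intro x hx
    rw [List.range_succ, List.map_append, List.flatten_append, List.map_singleton,
      List.flatten_singleton, Set.biUnion_lt_succ, ← length_flatten_map_range] at hx
    rw [Set.biUnion_lt_succ]
    exact Set.union_subset_union ih subset_rfl (faithfulEntries_append_subset _ _ _ _ hx)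

end FaithfulEntries

namespace FaithfullyOrdered

variable {α : Type*} [LinearOrder α]

theorem inter_Iio_length {l : List α} {C : Set ℕ} (h : FaithfullyOrdered l C) :
    FaithfullyOrdered l (C ∩ Set.Iio l.length) :=
  fun i j hi hj hij hiC hjC => h i j hi hj hij (fun h => hiC ⟨h, hi⟩) (fun h => hjC ⟨h, hj⟩)

theorem singleton (a : α) (C : Set ℕ) : FaithfullyOrdered [a] C := by
  intro i j hi hj hij
  simp only [List.length_singleton] at hi hj
  omega

theorem append {l₁ l₂ : List α} {C₁ C₂ : Set ℕ}
    (h₁ : FaithfullyOrdered l₁ C₁) (h₂ : FaithfullyOrdered l₂ C₂)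
    (hsep : ∀ x ∈ faithfulEntries l₁ C₁, ∀ y ∈ faithfulEntries l₂ C₂, x < y) :
    FaithfullyOrdered (l₁ ++ l₂) (C₁ ∪ (l₁.length + ·) '' C₂) := by
  intro i j hi hj hij hiC hjC
  rw [List.length_append] at hi hj
  have left : ∀ k, k ∉ C₁ ∪ (l₁.length + ·) '' C₂ → k ∉ C₁ :=
    fun k hk hC => hk (Or.inl hC)
  have right : ∀ k, l₁.length ≤ k → k ∉ C₁ ∪ (l₁.length + ·) '' C₂ → k - l₁.length ∉ C₂ :=
    fun k hle hk hC => hk (Or.inr ⟨_, hC, by simp only; omega⟩)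
  by_cases hi₁ : i < l₁.length
  · rw [List.getElem_append_left hi₁]
    by_cases hj₁ : j < l₁.length
    · rw [List.getElem_append_left hj₁]
      exact h₁ i j hi₁ hj₁ hij (left i hiC) (left j hjC)
    · rw [not_lt] at hj₁
      rw [List.getElem_append_right hj₁]
      exact hsep _ (getElem_mem_faithfulEntries hi₁ (left i hiC))
        _ (getElem_mem_faithfulEntries _ (right j hj₁ hjC))
  · rw [not_lt] at hi₁
    rw [List.getElem_append_right hi₁, List.getElem_append_right (by omega)]
    exact h₂ _ _ (by omega) (by omega) (by omega) (right i hi₁ hiC) (right j (by omega) hjC)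

theorem append_singleton {l : List α} {C : Set ℕ} {a : α} (h : FaithfullyOrdered l C)
    (ha : ∀ x ∈ faithfulEntries l C, x < a) :
    FaithfullyOrdered (l ++ [a]) (C ∩ Set.Iio l.length) := by
  have := h.inter_Iio_length.append (singleton a ∅) fun x hx y hy => by
    rw [faithfulEntries_inter_Iio_length] at hx
    rw [faithfulEntries_singleton_subset a ∅ hy]
    exact ha x hx
  simpa only [Set.image_empty, Set.union_empty] using this

theorem flatten_map_range {f : ℕ → List α} {D : ℕ → Set ℕ} {S : ℕ}
    (hf : ∀ i < S, FaithfullyOrdered (f i) (D i))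
    (hsep : ∀ i j, i < j → j < S →
      ∀ x ∈ faithfulEntries (f i) (D i), ∀ y ∈ faithfulEntries (f j) (D j), x < y) :
    FaithfullyOrdered ((List.range S).map f).flatten
      (⋃ i, ⋃ (_ : i < S), (fun c => (∑ j ∈ Finset.range i, (f j).length) + c) '' D i) := by
  induction S with
  | zero => intro i j hi; simp at hi
  | succ S ih =>
    rw [List.range_succ, List.map_append, List.flatten_append, List.map_singleton,
      List.flatten_singleton, Set.biUnion_lt_succ, ← length_flatten_map_range]
    refine (ih (fun i hi => hf i (by omega)) fun i j hij hj => hsep i j hij (by omega)).append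
      (hf S S.lt_succ_self) fun x hx y hy => ?_
    obtain ⟨i, hi, hx⟩ := Set.mem_iUnion₂.mp (faithfulEntries_flatten_map_range_subset f D S hx)
    exact hsep i S hi S.lt_succ_self x hx y hy

end FaithfullyOrdered

/-- interleaving the buckets `B 0, …, B (S-1)` with the strictly increasing
(safe, hence faithful) pivots `p 0 < p 1 < ⋯ < p (S-1)`, where all faithful values of
`B 0` are below `p 0` and all faithful values of `B i` (for `0 < i < S`) lie strictly
between `p (i-1)` and `p i`, yields a faithfully ordered list with respect to the
induced corrupted-position set. -/
theorem bucket_interleaving_faithfullyOrdered {α : Type*} [LinearOrder α]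
    (S : ℕ) (p : ℕ → α) (B : ℕ → List α) (C : ℕ → Set ℕ)
    (hp : ∀ i, i + 1 < S → p i < p (i + 1))
    (hB : ∀ i, i < S → FaithfullyOrdered (B i) (C i))
    (hlt : ∀ i, i < S → ∀ (j : ℕ) (hj : j < (B i).length), j ∉ C i → (B i)[j] < p i)
    (hgt : ∀ i, 0 < i → i < S →
      ∀ (j : ℕ) (hj : j < (B i).length), j ∉ C i → p (i - 1) < (B i)[j]) :
    FaithfullyOrdered (((List.range S).map (fun i => B i ++ [p i])).flatten)
      (⋃ i, ⋃ (_ : i < S),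
        (fun c => (∑ j ∈ Finset.range i, ((B j).length + 1)) + c) ''
          (C i ∩ Set.Iio (B i).length)) := by
  have hmono : MonotoneOn p (Set.Iic (S - 1)) :=
    (strictMonoOn_Iic_of_lt_succ fun m hm => hp m (by omega)).monotoneOn
  have hblock : ∀ i < S, FaithfullyOrdered (B i ++ [p i]) (C i ∩ Set.Iio (B i).length) :=
    fun i hi => (hB i hi).append_singleton fun _ ⟨j, hj, hjC, hx⟩ => hx ▸ hlt i hi j hj hjC
  have hsep : ∀ i j, i < j → j < S →
      ∀ x ∈ faithfulEntries (B i ++ [p i]) (C i ∩ Set.Iio (B i).length),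
      ∀ y ∈ faithfulEntries (B j ++ [p j]) (C j ∩ Set.Iio (B j).length), x < y := by
    intro i j hij hj x hx y hy
    have hx_le : x ≤ p i := by
      rcases faithfulEntries_append_singleton_subset _ _ _ hx with rfl | ⟨k, hk, hkC, rfl⟩
      exacts [le_rfl, (hlt i (by omega) k hk hkC).le]
    have hy_gt : p (j - 1) < y := by
      rcases faithfulEntries_append_singleton_subset _ _ _ hy with rfl | ⟨k, hk, hkC, rfl⟩
      · simpa [Nat.sub_add_cancel (by omega : 1 ≤ j)] using hp (j - 1) (by omega)
      · exact hgt j (by omega) hj k hk hkC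
    calc x ≤ p i := hx_le
      _ ≤ p (j - 1) := hmono (by simp; omega) (by simp; omega) (by omega)
      _ < y := hy_gt
  simpa only [List.length_append, List.length_singleton] using
    FaithfullyOrdered.flatten_map_range hblock hsep
end

section
/- Let l be a list over a linear order, faithfully ordered with respect to a finite corrupted-position set C, let z be any value, and let t be an index. If strictly more than |C| positions i ≤ t satisfy l[i] > z, then every faithful position j > t satisfies l[j] > z. (In particular, if at least δ+1 keys greater than z occur among the already-scanned positions and at most δ keys are corrupted, then some scanned key greater than z is faithful, so all faithful keys still to be read exceed z.) -/
theorem Finset.exists_val_notMem_of_card_lt {n : ℕ} {C : Finset ℕ} {S : Finset (Fin n)}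
    (h : C.card < S.card) : ∃ i ∈ S, i.val ∉ C := by
  rw [← Finset.card_map Fin.valEmbedding] at h
  obtain ⟨_, hmem, hC⟩ := Finset.exists_mem_notMem_of_card_lt_card h
  obtain ⟨i, hi, rfl⟩ := Finset.mem_map.mp hmem
  exact ⟨i, hi, hC⟩

theorem FaithfullyOrdered.lt_getElem_of_lt_getElem {α : Type*} [LinearOrder α] {l : List α}
    {C : Set ℕ} (h : FaithfullyOrdered l C) {z : α} {i j : ℕ} (hi : i < l.length)
    (hj : j < l.length) (hij : i < j) (hiC : i ∉ C) (hjC : j ∉ C) (hz : z < l[i]) :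
    z < l[j] :=
  hz.trans (h i j hi hj hij hiC hjC)

/-- if strictly more than `|C|` positions `i ≤ t` of a faithfully ordered
list hold a key greater than `z`, then every faithful position after `t` holds a key
greater than `z`. -/
theorem faithful_tail_gt_of_many_scanned_gt {α : Type*} [LinearOrder α]
    (l : List α) (C : Finset ℕ) (h : FaithfullyOrdered l ↑C) (z : α) (t : ℕ)
    (hmany : C.card <
      (Finset.univ.filter (fun i : Fin l.length => i.val ≤ t ∧ z < l.get i)).card) :
    ∀ (j : ℕ) (hj : j < l.length), t < j → j ∉ C → z < l[j] := by
  intro j hj htj hjC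
  obtain ⟨i, hiS, hiC⟩ := Finset.exists_val_notMem_of_card_lt hmany
  obtain ⟨hit, hzi⟩ := (Finset.mem_filter.mp hiS).2
  exact h.lt_getElem_of_lt_getElem i.isLt hj (hit.trans_lt htj) hiC hjC hzi
end

section
/- Let l be a list of length 2n over a linear order, faithfully ordered with respect to a corrupted-position set C with |C| ≤ α. Suppose a set F of positions of l is the union of k pairwise disjoint inverted pairs, i.e., k pairwise disjoint pairs (i_m, j_m) with i_m < j_m and l[i_m] ≥ l[j_m]. Then |F| = 2k ≤ 2α, and the complement of F has size at least 2(n − α). (This gives the size guarantees of S-PurifyingMerge: the failed-keys sequence F has length at most 2α and the purified output Z has length at least 2(n − α).) -/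
/-- size guarantees of S-PurifyingMerge.  If `l` has length `2n`, is
faithfully ordered with respect to `C` with `|C| ≤ a` (the actual number of faults),
and `F` is the union of `k` pairwise disjoint inverted pairs of positions of `l`, then
`|F| = 2k ≤ 2a` and the complement of `F` among the positions of `l` has size at least
`2(n − a)`. -/
theorem purifyingMerge_size_guarantees {α : Type*} [LinearOrder α]
    (n a k : ℕ) (l : List α) (C : Finset ℕ)
    (hlen : l.length = 2 * n) (hford : FaithfullyOrdered l ↑C) (hC : C.card ≤ a)
    (i j : Fin k → ℕ)
    (hij : ∀ m, i m < j m) (hjlen : ∀ m, j m < l.length)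
    (hinv : ∀ m, l[j m]'(hjlen m) ≤ l[i m]'((hij m).trans (hjlen m)))
    (hdisj : Function.Injective (Sum.elim i j))
    (F : Finset ℕ)
    (hF : F = Finset.image i Finset.univ ∪ Finset.image j Finset.univ) :
    F.card = 2 * k ∧ F.card ≤ 2 * a ∧ 2 * (n - a) ≤ (Finset.range (2 * n) \ F).card := by
  classical
  have hi_inj : Function.Injective i := fun m₁ m₂ h => by
    have := hdisj (a₁ := Sum.inl m₁) (a₂ := Sum.inl m₂) (by simpa using h)
    simpa using this
  have hj_inj : Function.Injective j := fun m₁ m₂ h => by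
    have := hdisj (a₁ := Sum.inr m₁) (a₂ := Sum.inr m₂) (by simpa using h)
    simpa using this
  have hij_ne : ∀ m₁ m₂, i m₁ ≠ j m₂ := by
    intro m₁ m₂ h
    have := hdisj (a₁ := Sum.inl m₁) (a₂ := Sum.inr m₂) (by simpa using h)
    simpa using this
  have hdisj_img : Disjoint (Finset.image i Finset.univ) (Finset.image j Finset.univ) := by
    rw [Finset.disjoint_left]
    intro x hx hx'
    obtain ⟨m₁, -, rfl⟩ := Finset.mem_image.mp hx
    obtain ⟨m₂, -, h⟩ := Finset.mem_image.mp hx'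
    exact hij_ne m₁ m₂ h.symm
  have hcard : F.card = 2 * k := by
    rw [hF, Finset.card_union_of_disjoint hdisj_img,
      Finset.card_image_of_injective _ hi_inj, Finset.card_image_of_injective _ hj_inj]
    simp [two_mul]
  -- each pair contains a corrupted position
  have hcorr : ∀ m, i m ∈ C ∨ j m ∈ C := by
    intro m
    by_contra h
    push_neg at h
    have := hford (i m) (j m) ((hij m).trans (hjlen m)) (hjlen m) (hij m)
      (by simpa using h.1) (by simpa using h.2)
    exact absurd (hinv m) (not_le.mpr this)
  set f : Fin k → ℕ := fun m => if i m ∈ C then i m else j m with hf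
  have hfC : ∀ m, f m ∈ C := by
    intro m
    by_cases h : i m ∈ C <;> simp [hf, h]
    exact (hcorr m).resolve_left h
  have hf_inj : Function.Injective f := by
    intro m₁ m₂ h
    simp only [hf] at h
    split_ifs at h with h1 h2 h2
    · exact hi_inj h
    · exact absurd h (hij_ne m₁ m₂)
    · exact absurd h.symm (hij_ne m₂ m₁)
    · exact hj_inj h
  have hka : k ≤ a := by
    calc k = (Finset.image f Finset.univ).card := by
            rw [Finset.card_image_of_injective _ hf_inj]; simp
      _ ≤ C.card := Finset.card_le_card (by
            intro x hx
            obtain ⟨m, -, rfl⟩ := Finset.mem_image.mp hx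
            exact hfC m)
      _ ≤ a := hC
  have hFsub : F ⊆ Finset.range (2 * n) := by
    rw [hF]
    intro x hx
    rw [Finset.mem_range, ← hlen]
    rcases Finset.mem_union.mp hx with hx | hx
    · obtain ⟨m, -, rfl⟩ := Finset.mem_image.mp hx
      exact (hij m).trans (hjlen m)
    · obtain ⟨m, -, rfl⟩ := Finset.mem_image.mp hx
      exact hjlen m
  have hsd : (Finset.range (2 * n) \ F).card = 2 * n - 2 * k := by
    rw [Finset.card_sdiff_of_subset hFsub, Finset.card_range, hcard]
  refine ⟨hcard, ?_, ?_⟩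
  · omega
  · omega
end

section
/- Let A and B be strictly increasing lists over a linear order with no element of A equal to an element of B, and let t be any value. Then merging A and B (with respect to ≤) equals the concatenation of the merge of the sublists of elements ≤ t with the merge of the sublists of elements > t: merge A B = merge (A.filter (· ≤ t)) (B.filter (· ≤ t)) ++ merge (A.filter (t < ·)) (B.filter (t < ·)). Hence merging two sorted sequences chunk by chunk, cutting both sequences at a common threshold, produces the same result as merging them entirely. -/
/-! Both sides are sorted permutations of `A ++ B`: every element of the lower part is `≤ t`
and every element of the upper part is `> t`. In a linear order a sorted list is determined
by its multiset of elements. -/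

namespace List

variable {α : Type*}

theorem merge_filter_append_merge_filter_not_perm (p : α → Bool) (le : α → α → Bool)
    (xs ys : List α) :
    (xs.filter p).merge (ys.filter p) le ++
        (xs.filter (!p ·)).merge (ys.filter (!p ·)) le ~ xs.merge ys le := by
  have regroup :
      xs.filter p ++ ys.filter p ++ (xs.filter (!p ·) ++ ys.filter (!p ·)) ~ xs ++ ys :=
    calc _ = xs.filter p ++ (ys.filter p ++ (xs.filter (!p ·) ++ ys.filter (!p ·))) :=
          append_assoc ..
      _ ~ xs.filter p ++ (xs.filter (!p ·) ++ (ys.filter p ++ ys.filter (!p ·))) :=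
          (perm_append_comm_assoc ..).append_left _
      _ = xs.filter p ++ xs.filter (!p ·) ++ (ys.filter p ++ ys.filter (!p ·)) :=
          (append_assoc ..).symm
      _ ~ xs ++ ys := (filter_append_perm p xs).append (filter_append_perm p ys)
  exact ((merge_perm_append le).append (merge_perm_append le)).trans
    (regroup.trans (merge_perm_append le).symm)

theorem pairwise_merge_filter_le_append_merge_filter_lt [LinearOrder α] {xs ys : List α}
    (hxs : xs.Pairwise (· ≤ ·)) (hys : ys.Pairwise (· ≤ ·)) (t : α) :
    ((xs.filter (· ≤ t)).merge (ys.filter (· ≤ t)) ++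
        (xs.filter (t < ·)).merge (ys.filter (t < ·))).Pairwise (· ≤ ·) := by
  refine pairwise_append.2 ⟨(hxs.filter _).merge (hys.filter _),
    (hxs.filter _).merge (hys.filter _), fun x hx y hy => ?_⟩
  have hxt : x ≤ t := by
    rcases mem_merge.1 hx with h | h <;> simpa using (mem_filter.1 h).2
  have hty : t < y := by
    rcases mem_merge.1 hy with h | h <;> simpa using (mem_filter.1 h).2
  exact hxt.trans hty.le

end List

theorem merge_eq_merge_filter_append_merge_filter_general {α : Type*} [LinearOrder α]
    (A B : List α) (hA : A.Pairwise (· < ·)) (hB : B.Pairwise (· < ·))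
    (t : α) :
    A.merge B =
      (A.filter (fun x => x ≤ t)).merge (B.filter (fun x => x ≤ t)) ++
        (A.filter (fun x => t < x)).merge (B.filter (fun x => t < x)) := by
  have hA' : A.Pairwise (· ≤ ·) := hA.imp le_of_lt
  have hB' : B.Pairwise (· ≤ ·) := hB.imp le_of_lt
  refine List.Perm.eq_of_pairwise' (hA'.merge hB')
    (List.pairwise_merge_filter_le_append_merge_filter_lt hA' hB' t) ?_
  have upper_eq_not_lower : (fun x => decide (t < x)) = (fun x => !decide (x ≤ t)) := by
    funext x
    simp only [← decide_not, not_le]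
  rw [upper_eq_not_lower]
  exact (List.merge_filter_append_merge_filter_not_perm _ _ A B).symm

/-- merging two strictly sorted, disjoint lists can be done chunk by chunk:
cutting both lists at a common threshold `t` and concatenating the merge of the lower
parts with the merge of the upper parts yields the merge of the whole lists. -/
theorem merge_eq_merge_filter_append_merge_filter {α : Type*} [LinearOrder α]
    (A B : List α) (hA : A.Pairwise (· < ·)) (hB : B.Pairwise (· < ·))
    (hdisj : ∀ x ∈ A, x ∉ B) (t : α) :
    A.merge B =
      (A.filter (fun x => x ≤ t)).merge (B.filter (fun x => x ≤ t)) ++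
        (A.filter (fun x => t < x)).merge (B.filter (fun x => t < x)) :=
  merge_eq_merge_filter_append_merge_filter_general A B hA hB t
end
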